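/- The Hellinger distance d_H(Φ, Ψ) := inf{ ‖W_Ψ − W_Φ‖₂ : W_Φ, W_Ψ ∈ L₂^{m×m}(𝕋), W_Φ W_Φ* = Φ, W_Ψ W_Ψ* = Ψ } defines a metric on the set of bounded coercive m×m spectral densities on the unit circle. -/

import Mathlib

open Matrix MeasureTheory
open scoped ComplexOrder

/-- Normalized Lebesgue measure dθ/2π on one period, modeling the unit circle. -/
noncomputable def muT : Measure ℝ :=
  (ENNReal.ofReal (2 * Real.pi)⁻¹) • (volume.restrict (Set.Ioc 0 (2 * Real.pi)))

/-- Bounded coercive Hermitian-valued spectral density on the circle. -/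
def IsSpecDens {m : ℕ} (Φ : ℝ → Matrix (Fin m) (Fin m) ℂ) : Prop :=
  (∀ i j, Measurable fun θ => Φ θ i j) ∧ Function.Periodic Φ (2 * Real.pi) ∧
  (∀ θ, (Φ θ).IsHermitian) ∧ (∃ C : ℝ, ∀ θ i j, ‖Φ θ i j‖ ≤ C) ∧
  (∃ c : ℝ, 0 < c ∧ ∀ θ, ((Φ θ) - c • (1 : Matrix (Fin m) (Fin m) ℂ)).PosSemidef)

/-- W is a square spectral factor of Φ lying in L₂^{m×m}(𝕋). -/
def IsFactor {m : ℕ} (W Φ : ℝ → Matrix (Fin m) (Fin m) ℂ) : Prop :=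
  (∀ i j, Measurable fun θ => W θ i j) ∧
  Integrable (fun θ => ((W θ) * (W θ)ᴴ).trace.re) muT ∧
  (∀ᵐ θ ∂muT, (W θ) * (W θ)ᴴ = Φ θ)

/-- The L₂ norm of a matrix-valued function: ‖W‖₂ = (tr ∫ W W*)^{1/2}. -/
noncomputable def normL2 {m : ℕ} (W : ℝ → Matrix (Fin m) (Fin m) ℂ) : ℝ :=
  Real.sqrt (∫ θ, ((W θ) * (W θ)ᴴ).trace.re ∂muT)

/-- The multivariable Hellinger distance. -/
noncomputable def dH {m : ℕ} (Φ Ψ : ℝ → Matrix (Fin m) (Fin m) ℂ) : ℝ :=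
  sInf {r : ℝ | ∃ WΦ WΨ, IsFactor WΦ Φ ∧ IsFactor WΨ Ψ ∧
    r = normL2 (fun θ => WΦ θ - WΨ θ)}

/-!
Every spectral density has a measurable factor, the pointwise square root `CFC.sqrt ∘ Φ`,
measurable because `CFC.sqrt` is continuous on the positive cone; hence none of the
infima defining `dH` is taken over the empty set.

Triangle inequality: two factors `W₁, W₂` of the same invertible `Ψ` differ by the measurable,
a.e. unitary right factor `V = W₂⁻¹ W₁`. If `W` is a factor of `Ξ`, so is `W V`, and
`‖W₁ - W V‖₂ = ‖(W₂ - W) V‖₂ = ‖W₂ - W‖₂`, so Minkowski's inequality in `L²` through `W₁`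
gives `dH Φ Ξ ≤ ‖WΦ - W₁‖₂ + ‖W₂ - W‖₂`.

Definiteness: `Φ - Ψ = (WΦ - WΨ) WΦ* + WΨ (WΦ - WΨ)*`, so by Cauchy–Schwarz
`∫ ‖Φ - Ψ‖ ≤ ‖WΦ - WΨ‖₂ (‖WΦ‖₂ + ‖WΨ‖₂)`, where `‖W‖₂² = ∫ tr Φ` for every factor `W` of `Φ`;
taking the infimum bounds `∫ ‖Φ - Ψ‖` by a multiple of `dH Φ Ψ`.
-/

instance Matrix.instMeasurableSpace {m n α : Type*} [MeasurableSpace α] :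
    MeasurableSpace (Matrix m n α) :=
  MeasurableSpace.pi

instance Matrix.instBorelSpace {m n α : Type*} [Countable m] [Countable n] [TopologicalSpace α]
    [MeasurableSpace α] [SecondCountableTopology α] [BorelSpace α] :
    BorelSpace (Matrix m n α) :=
  inferInstanceAs (BorelSpace (m → n → α))

theorem Matrix.measurable_iff {Ω m n α : Type*} [MeasurableSpace Ω] [MeasurableSpace α]
    {W : Ω → Matrix m n α} : Measurable W ↔ ∀ i j, Measurable fun θ => W θ i j :=
  measurable_pi_iff.trans <| forall_congr' fun _ => measurable_pi_iff

theorem Matrix.measurable_inv {n 𝕜 : Type*} [Fintype n] [DecidableEq n] [RCLike 𝕜] :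
    Measurable fun A : Matrix n n 𝕜 => A⁻¹ := by
  refine Matrix.measurable_iff.2 fun i j => ?_
  simp only [inv_def, smul_apply, smul_eq_mul, Ring.inverse_eq_inv']
  exact continuous_id.matrix_det.measurable.inv.mul
    (continuous_id.matrix_adjugate.matrix_elem i j).measurable

theorem Measurable.matrix_mul {Ω l m n α : Type*} [MeasurableSpace Ω] [Fintype m]
    [NonUnitalNonAssocSemiring α] [MeasurableSpace α] [MeasurableMul₂ α] [MeasurableAdd₂ α]
    {A : Ω → Matrix l m α} {B : Ω → Matrix m n α} (hA : Measurable A) (hB : Measurable B) :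
    Measurable fun θ => A θ * B θ := by
  refine Matrix.measurable_iff.2 fun i j => ?_
  simp only [mul_apply]
  exact Finset.measurable_sum _ fun k _ =>
    (Matrix.measurable_iff.1 hA i k).mul (Matrix.measurable_iff.1 hB k j)

theorem Real.le_sInf_add_sInf {s t : Set ℝ} {a : ℝ} (hs : s.Nonempty) (ht : t.Nonempty)
    (h : ∀ x ∈ s, ∀ y ∈ t, a ≤ x + y) : a ≤ sInf s + sInf t := by
  have ht' : ∀ x ∈ s, a - x ≤ sInf t := fun x hx =>
    le_csInf ht fun y hy => by linarith [h x hx y hy]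
  have : a - sInf t ≤ sInf s := le_csInf hs fun x hx => by linarith [ht' x hx]
  linarith

section Unitary

variable {m n α : Type*} [Fintype n] [DecidableEq n] [CommRing α] [StarRing α]

theorem Matrix.mul_unitary_mul_conjTranspose (A : Matrix m n α) {U : Matrix n n α}
    (hU : U ∈ unitaryGroup n α) : A * U * (A * U)ᴴ = A * Aᴴ := by
  rw [conjTranspose_mul, Matrix.mul_assoc, ← Matrix.mul_assoc U, ← star_eq_conjTranspose U,
    mem_unitaryGroup_iff.mp hU, Matrix.one_mul]

theorem Matrix.inv_mul_mem_unitaryGroup {A B : Matrix n n α} (h : A * Aᴴ = B * Bᴴ)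
    (hB : IsUnit B.det) : B⁻¹ * A ∈ unitaryGroup n α := by
  rw [mem_unitaryGroup_iff, star_eq_conjTranspose, conjTranspose_mul, conjTranspose_nonsing_inv,
    Matrix.mul_assoc, ← Matrix.mul_assoc A, h, ← Matrix.mul_assoc, ← Matrix.mul_assoc B⁻¹,
    nonsing_inv_mul _ hB, Matrix.one_mul,
    mul_nonsing_inv _ (by rwa [det_conjTranspose, isUnit_star])]

end Unitary

instance : IsFiniteMeasure muT := by
  constructor
  rw [muT, Measure.smul_apply, Measure.restrict_apply_univ, Real.volume_Ioc, smul_eq_mul]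
  exact ENNReal.mul_lt_top ENNReal.ofReal_lt_top ENNReal.ofReal_lt_top

section SpectralDensity

variable {m : ℕ} {Φ : ℝ → Matrix (Fin m) (Fin m) ℂ}

theorem IsSpecDens.posDef (hΦ : IsSpecDens Φ) (θ : ℝ) : (Φ θ).PosDef := by
  obtain ⟨c, hc, h⟩ := hΦ.2.2.2.2
  simpa using PosDef.posSemidef_add (h θ) (PosDef.one.smul hc)

theorem IsSpecDens.measurable (hΦ : IsSpecDens Φ) : Measurable Φ :=
  Matrix.measurable_iff.2 hΦ.1

theorem IsSpecDens.integrable_re_trace (hΦ : IsSpecDens Φ) :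
    Integrable (fun θ => (Φ θ).trace.re) muT := by
  obtain ⟨C, hC⟩ := hΦ.2.2.2.1
  refine Integrable.of_bound
    ((Complex.continuous_re.comp continuous_id.matrix_trace).measurable.comp
      hΦ.measurable).aestronglyMeasurable (m * C) (ae_of_all _ fun θ => ?_)
  calc ‖(Φ θ).trace.re‖ ≤ ∑ i, ‖Φ θ i i‖ :=
        (Complex.abs_re_le_norm _).trans (norm_sum_le _ _)
    _ ≤ ∑ _ : Fin m, C := Finset.sum_le_sum fun i _ => hC θ i i
    _ = m * C := by simp

theorem IsSpecDens.isUnit_det (hΦ : IsSpecDens Φ) (θ : ℝ) : IsUnit (Φ θ).det :=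
  (isUnit_iff_isUnit_det _).1 (hΦ.posDef θ).isUnit

open scoped Matrix.Norms.L2Operator MatrixOrder in
theorem IsSpecDens.exists_isFactor (hΦ : IsSpecDens Φ) : ∃ W, IsFactor W Φ := by
  have hnonneg (θ : ℝ) : 0 ≤ Φ θ := nonneg_iff_posSemidef.2 (hΦ.posDef θ).posSemidef
  have hsqrt (θ : ℝ) : CFC.sqrt (Φ θ) * (CFC.sqrt (Φ θ))ᴴ = Φ θ := by
    rw [← star_eq_conjTranspose, (CFC.sqrt_nonneg _).isSelfAdjoint.star_eq,
      CFC.sqrt_mul_sqrt_self _ (hnonneg θ)]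
  refine ⟨fun θ => CFC.sqrt (Φ θ), Matrix.measurable_iff.1 ?_, ?_, ae_of_all _ hsqrt⟩
  · exact CFC.continuousOn_sqrt.domRestrict.measurable.comp
      (hΦ.measurable.subtype_mk (h := hnonneg))
  · simpa only [hsqrt] using hΦ.integrable_re_trace

end SpectralDensity

section

attribute [local instance] Matrix.frobeniusNormedAddCommGroup

section Frobenius

variable {m n : Type*}

/- The topology of the Frobenius normed group on `Matrix` is not reducibly defeq to the product
topology of `Matrix`, so `L²` spaces of matrix-valued functions are taken on this isometric copy. -/
noncomputable def Matrix.toFrobenius (A : Matrix m n ℂ) :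
    PiLp 2 fun _ : m => EuclideanSpace ℂ n :=
  WithLp.toLp 2 fun i => WithLp.toLp 2 (A i)

theorem Matrix.continuous_toFrobenius : Continuous (toFrobenius : Matrix m n ℂ → _) := by
  unfold toFrobenius
  fun_prop

variable [Fintype m] [Fintype n]

theorem Matrix.frobenius_norm_sq_eq_re_trace (A : Matrix m n ℂ) :
    ‖A‖ ^ 2 = (A * Aᴴ).trace.re := by
  rw [frobenius_norm_def, ← Real.sqrt_eq_rpow, Real.sq_sqrt (by positivity)]
  simp [trace, mul_apply, Complex.re_sum, Complex.mul_conj', ← Complex.ofReal_pow]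

theorem Matrix.frobenius_norm_mul_conjTranspose_sub_le (A B : Matrix m n ℂ) :
    ‖A * Aᴴ - B * Bᴴ‖ ≤ ‖A - B‖ * (‖A‖ + ‖B‖) := by
  have h : A * Aᴴ - B * Bᴴ = (A - B) * Aᴴ + B * (A - B)ᴴ := by
    rw [Matrix.sub_mul, conjTranspose_sub, Matrix.mul_sub]; abel
  calc ‖A * Aᴴ - B * Bᴴ‖ ≤ ‖A - B‖ * ‖Aᴴ‖ + ‖B‖ * ‖(A - B)ᴴ‖ := by
        rw [h]
        exact (norm_add_le _ _).trans
          (add_le_add (frobenius_norm_mul _ _) (frobenius_norm_mul _ _))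
    _ = ‖A - B‖ * (‖A‖ + ‖B‖) := by
        rw [frobenius_norm_conjTranspose, frobenius_norm_conjTranspose]; ring

theorem Matrix.norm_toFrobenius (A : Matrix m n ℂ) : ‖A.toFrobenius‖ = ‖A‖ :=
  rfl

end Frobenius

variable {m : ℕ} {A B C W Φ Ψ : ℝ → Matrix (Fin m) (Fin m) ℂ}

theorem normL2_eq_sqrt_integral_norm_sq (W : ℝ → Matrix (Fin m) (Fin m) ℂ) :
    normL2 W = √(∫ θ, ‖W θ‖ ^ 2 ∂muT) := by
  simp only [normL2, frobenius_norm_sq_eq_re_trace]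

theorem normL2_congr_ae (h : A =ᵐ[muT] B) : normL2 A = normL2 B := by
  simp only [normL2_eq_sqrt_integral_norm_sq]
  rw [integral_congr_ae (h.mono fun θ hθ => by rw [hθ])]

theorem normL2_sub_comm (A B : ℝ → Matrix (Fin m) (Fin m) ℂ) :
    normL2 (A - B) = normL2 (B - A) := by
  simp only [normL2_eq_sqrt_integral_norm_sq, Pi.sub_apply, norm_sub_rev]

theorem IsFactor.normL2_eq (hW : IsFactor W Φ) :
    normL2 W = √(∫ θ, (Φ θ).trace.re ∂muT) := by
  rw [normL2, integral_congr_ae (hW.2.2.mono fun θ hθ => by rw [hθ])]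

theorem IsFactor.memLp (hW : IsFactor W Φ) : MemLp (fun θ => (W θ).toFrobenius) 2 muT :=
  (memLp_two_iff_integrable_sq_norm (Matrix.continuous_toFrobenius.measurable.comp
    (Matrix.measurable_iff.2 hW.1)).aestronglyMeasurable).2
    (by simpa only [Function.comp_apply, norm_toFrobenius, frobenius_norm_sq_eq_re_trace]
      using hW.2.1)

theorem MeasureTheory.MemLp.normL2_eq (hW : MemLp (fun θ => (W θ).toFrobenius) 2 muT) :
    normL2 W = ‖hW.toLp _‖ := by
  rw [Lp.norm_toLp, hW.eLpNorm_eq_integral_rpow_norm two_ne_zero ENNReal.ofNat_ne_top,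
    ENNReal.toReal_ofReal (by positivity), normL2_eq_sqrt_integral_norm_sq, Real.sqrt_eq_rpow]
  norm_num [norm_toFrobenius]

theorem normL2_sub_eq_norm_toLp_sub (hA : MemLp (fun θ => (A θ).toFrobenius) 2 muT)
    (hB : MemLp (fun θ => (B θ).toFrobenius) 2 muT) :
    normL2 (A - B) = ‖hA.toLp _ - hB.toLp _‖ := by
  rw [← MemLp.toLp_sub]
  exact (hA.sub hB).normL2_eq

theorem normL2_sub_le (hA : MemLp (fun θ => (A θ).toFrobenius) 2 muT)
    (hB : MemLp (fun θ => (B θ).toFrobenius) 2 muT)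
    (hC : MemLp (fun θ => (C θ).toFrobenius) 2 muT) :
    normL2 (A - C) ≤ normL2 (A - B) + normL2 (B - C) := by
  rw [normL2_sub_eq_norm_toLp_sub hA hC, normL2_sub_eq_norm_toLp_sub hA hB,
    normL2_sub_eq_norm_toLp_sub hB hC]
  exact norm_sub_le_norm_sub_add_norm_sub _ _ _

theorem integral_norm_mul_norm_le (hA : MemLp (fun θ => (A θ).toFrobenius) 2 muT)
    (hB : MemLp (fun θ => (B θ).toFrobenius) 2 muT) :
    ∫ θ, ‖A θ‖ * ‖B θ‖ ∂muT ≤ normL2 A * normL2 B := by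
  have h := integral_mul_norm_le_Lp_mul_Lq Real.HolderConjugate.two_two
    (by simpa using hA) (by simpa using hB)
  simpa [norm_toFrobenius, normL2_eq_sqrt_integral_norm_sq, Real.sqrt_eq_rpow] using h

theorem IsFactor.integrable (hW : IsFactor W Φ) :
    Integrable (fun θ => (Φ θ).toFrobenius) muT := by
  have hmeas : Measurable fun θ => (W θ * (W θ)ᴴ).toFrobenius :=
    (Matrix.continuous_toFrobenius.comp
      (continuous_id.matrix_mul continuous_id.matrix_conjTranspose)).measurable.comp
      (Matrix.measurable_iff.2 hW.1)
  refine hW.2.1.mono' (hmeas.aestronglyMeasurable.congr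
    (hW.2.2.mono fun θ hθ => congrArg toFrobenius hθ)) ?_
  filter_upwards [hW.2.2] with θ hθ
  calc ‖(Φ θ).toFrobenius‖ = ‖W θ * (W θ)ᴴ‖ := by rw [norm_toFrobenius, hθ]
    _ ≤ ‖W θ‖ * ‖(W θ)ᴴ‖ := frobenius_norm_mul _ _
    _ = (W θ * (W θ)ᴴ).trace.re := by
      rw [frobenius_norm_conjTranspose, ← sq, frobenius_norm_sq_eq_re_trace]

theorem integral_norm_sub_le_normL2_sub_mul {WΦ WΨ : ℝ → Matrix (Fin m) (Fin m) ℂ}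
    (hWΦ : IsFactor WΦ Φ) (hWΨ : IsFactor WΨ Ψ) :
    ∫ θ, ‖Φ θ - Ψ θ‖ ∂muT ≤ normL2 (WΦ - WΨ) * (normL2 WΦ + normL2 WΨ) := by
  have hD : MemLp (fun θ => ((WΦ - WΨ) θ).toFrobenius) 2 muT := hWΦ.memLp.sub hWΨ.memLp
  have hDΦ : Integrable (fun θ => ‖(WΦ - WΨ) θ‖ * ‖WΦ θ‖) muT :=
    hD.norm.integrable_mul hWΦ.memLp.norm
  have hDΨ : Integrable (fun θ => ‖(WΦ - WΨ) θ‖ * ‖WΨ θ‖) muT :=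
    hD.norm.integrable_mul hWΨ.memLp.norm
  calc ∫ θ, ‖Φ θ - Ψ θ‖ ∂muT
      ≤ ∫ θ, ‖(WΦ - WΨ) θ‖ * ‖WΦ θ‖ + ‖(WΦ - WΨ) θ‖ * ‖WΨ θ‖ ∂muT := by
        refine integral_mono_ae (hWΦ.integrable.sub hWΨ.integrable).norm (hDΦ.add hDΨ) ?_
        filter_upwards [hWΦ.2.2, hWΨ.2.2] with θ hΦθ hΨθ
        rw [← hΦθ, ← hΨθ, ← mul_add]
        exact frobenius_norm_mul_conjTranspose_sub_le _ _
    _ = ∫ θ, ‖(WΦ - WΨ) θ‖ * ‖WΦ θ‖ ∂muT + ∫ θ, ‖(WΦ - WΨ) θ‖ * ‖WΨ θ‖ ∂muT :=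
        integral_add hDΦ hDΨ
    _ ≤ normL2 (WΦ - WΨ) * normL2 WΦ + normL2 (WΦ - WΨ) * normL2 WΨ :=
        add_le_add (integral_norm_mul_norm_le hD hWΦ.memLp)
          (integral_norm_mul_norm_le hD hWΨ.memLp)
    _ = normL2 (WΦ - WΨ) * (normL2 WΦ + normL2 WΨ) := by ring

variable {Ξ V : ℝ → Matrix (Fin m) (Fin m) ℂ}

theorem normL2_mul_unitary (hV : ∀ᵐ θ ∂muT, V θ ∈ unitaryGroup (Fin m) ℂ) :
    normL2 (W * V) = normL2 W := by
  unfold normL2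
  congr 1
  exact integral_congr_ae <| hV.mono fun θ hθ => by
    simp only [Pi.mul_apply, mul_unitary_mul_conjTranspose _ hθ]

theorem IsFactor.mul_unitary (hW : IsFactor W Φ) (hVm : Measurable V)
    (hV : ∀ᵐ θ ∂muT, V θ ∈ unitaryGroup (Fin m) ℂ) : IsFactor (W * V) Φ := by
  refine ⟨Matrix.measurable_iff.1 ((Matrix.measurable_iff.2 hW.1).matrix_mul hVm),
    hW.2.1.congr ?_, ?_⟩
  · filter_upwards [hV] with θ hθ
    rw [Pi.mul_apply, mul_unitary_mul_conjTranspose _ hθ]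
  · filter_upwards [hV, hW.2.2] with θ hθ hWθ
    rw [Pi.mul_apply, mul_unitary_mul_conjTranspose _ hθ, hWθ]

theorem IsFactor.exists_isFactor_normL2_sub_eq {W₁ W₂ : ℝ → Matrix (Fin m) (Fin m) ℂ}
    (hW : IsFactor W Ξ) (hΨ : ∀ θ, IsUnit (Ψ θ).det) (hW₁ : IsFactor W₁ Ψ)
    (hW₂ : IsFactor W₂ Ψ) : ∃ W', IsFactor W' Ξ ∧ normL2 (W₁ - W') = normL2 (W₂ - W) := by
  have hdet : ∀ᵐ θ ∂muT, IsUnit (W₂ θ).det := hW₂.2.2.mono fun θ hθ => by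
    have h := hΨ θ
    rw [← hθ, det_mul, det_conjTranspose] at h
    exact isUnit_of_mul_isUnit_left h
  set V := fun θ => (W₂ θ)⁻¹ * W₁ θ
  have hVm : Measurable V :=
    (Matrix.measurable_inv.comp (Matrix.measurable_iff.2 hW₂.1)).matrix_mul
      (Matrix.measurable_iff.2 hW₁.1)
  have hV : ∀ᵐ θ ∂muT, V θ ∈ unitaryGroup (Fin m) ℂ := by
    filter_upwards [hW₁.2.2, hW₂.2.2, hdet] with θ h₁ h₂ hθ
    exact inv_mul_mem_unitaryGroup (h₁.trans h₂.symm) hθ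
  refine ⟨W * V, hW.mul_unitary hVm hV, ?_⟩
  calc normL2 (W₁ - W * V) = normL2 ((W₂ - W) * V) :=
        normL2_congr_ae <| hdet.mono fun θ hθ => by
          simp only [Pi.sub_apply, Pi.mul_apply, Matrix.sub_mul, V,
            mul_nonsing_inv_cancel_left _ _ hθ]
    _ = normL2 (W₂ - W) := normL2_mul_unitary hV

theorem dH_nonneg (Φ Ψ : ℝ → Matrix (Fin m) (Fin m) ℂ) : 0 ≤ dH Φ Ψ :=
  Real.sInf_nonneg (by rintro _ ⟨_, _, _, _, rfl⟩; exact Real.sqrt_nonneg _)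

theorem dH_le {WΦ WΨ : ℝ → Matrix (Fin m) (Fin m) ℂ} (hWΦ : IsFactor WΦ Φ)
    (hWΨ : IsFactor WΨ Ψ) : dH Φ Ψ ≤ normL2 (WΦ - WΨ) :=
  csInf_le ⟨0, by rintro _ ⟨_, _, _, _, rfl⟩; exact Real.sqrt_nonneg _⟩ ⟨WΦ, WΨ, hWΦ, hWΨ, rfl⟩

-- junk value: `sInf ∅ = 0`
theorem dH_eq_zero_of_forall_not_isFactor (h : ∀ W, ¬IsFactor W Φ)
    (Ψ : ℝ → Matrix (Fin m) (Fin m) ℂ) : dH Φ Ψ = 0 := by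
  refine (congrArg sInf (Set.eq_empty_of_forall_notMem ?_)).trans Real.sInf_empty
  rintro _ ⟨W, -, hW, -, -⟩
  exact h W hW

theorem dH_self (Φ : ℝ → Matrix (Fin m) (Fin m) ℂ) : dH Φ Φ = 0 := by
  by_cases h : ∀ W, ¬IsFactor W Φ
  · exact dH_eq_zero_of_forall_not_isFactor h Φ
  obtain ⟨W, hW⟩ := not_forall_not.1 h
  refine le_antisymm ((dH_le hW hW).trans_eq ?_) (dH_nonneg Φ Φ)
  simp [normL2]

theorem dH_comm (Φ Ψ : ℝ → Matrix (Fin m) (Fin m) ℂ) : dH Φ Ψ = dH Ψ Φ := by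
  simp only [dH]
  congr 1
  ext r
  constructor <;>
  · rintro ⟨Wa, Wb, ha, hb, rfl⟩
    exact ⟨Wb, Wa, hb, ha, normL2_sub_comm Wa Wb⟩

theorem dH_triangle (Φ Ξ : ℝ → Matrix (Fin m) (Fin m) ℂ) (hΨ : IsSpecDens Ψ) :
    dH Φ Ξ ≤ dH Φ Ψ + dH Ψ Ξ := by
  have hsum := add_nonneg (dH_nonneg Φ Ψ) (dH_nonneg Ψ Ξ)
  by_cases hΦ : ∀ W, ¬IsFactor W Φ
  · rwa [dH_eq_zero_of_forall_not_isFactor hΦ]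
  by_cases hΞ : ∀ W, ¬IsFactor W Ξ
  · rwa [dH_comm, dH_eq_zero_of_forall_not_isFactor hΞ]
  obtain ⟨WΦ, hWΦ⟩ := not_forall_not.1 hΦ
  obtain ⟨WΞ, hWΞ⟩ := not_forall_not.1 hΞ
  obtain ⟨WΨ, hWΨ⟩ := hΨ.exists_isFactor
  refine Real.le_sInf_add_sInf ⟨_, WΦ, WΨ, hWΦ, hWΨ, rfl⟩ ⟨_, WΨ, WΞ, hWΨ, hWΞ, rfl⟩ ?_
  rintro _ ⟨W₁, W₂, hW₁, hW₂, rfl⟩ _ ⟨W₃, W₄, hW₃, hW₄, rfl⟩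
  obtain ⟨W, hW, hW_eq⟩ := hW₄.exists_isFactor_normL2_sub_eq hΨ.isUnit_det hW₂ hW₃
  calc dH Φ Ξ ≤ normL2 (W₁ - W) := dH_le hW₁ hW
    _ ≤ normL2 (W₁ - W₂) + normL2 (W₂ - W) := normL2_sub_le hW₁.memLp hW₂.memLp hW.memLp
    _ = normL2 (W₁ - W₂) + normL2 (W₃ - W₄) := by rw [hW_eq]

theorem integral_norm_sub_le_dH_mul {WΦ WΨ : ℝ → Matrix (Fin m) (Fin m) ℂ}
    (hWΦ : IsFactor WΦ Φ) (hWΨ : IsFactor WΨ Ψ) :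
    ∫ θ, ‖Φ θ - Ψ θ‖ ∂muT ≤ dH Φ Ψ * (normL2 WΦ + normL2 WΨ) := by
  have hK : 0 ≤ normL2 WΦ + normL2 WΨ := add_nonneg (Real.sqrt_nonneg _) (Real.sqrt_nonneg _)
  rw [mul_comm, ← smul_eq_mul, dH, ← Real.sInf_smul_of_nonneg hK]
  refine le_csInf (Set.Nonempty.smul_set ⟨_, WΦ, WΨ, hWΦ, hWΨ, rfl⟩) ?_
  rintro _ ⟨_, ⟨W₁, W₂, hW₁, hW₂, rfl⟩, rfl⟩
  simp only [smul_eq_mul]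
  rw [mul_comm, hWΦ.normL2_eq, hWΨ.normL2_eq, ← hW₁.normL2_eq, ← hW₂.normL2_eq]
  exact integral_norm_sub_le_normL2_sub_mul hW₁ hW₂

theorem ae_eq_of_dH_eq_zero {WΦ WΨ : ℝ → Matrix (Fin m) (Fin m) ℂ}
    (hWΦ : IsFactor WΦ Φ) (hWΨ : IsFactor WΨ Ψ) (h : dH Φ Ψ = 0) : Φ =ᵐ[muT] Ψ := by
  have hint : Integrable (fun θ => ‖Φ θ - Ψ θ‖) muT := (hWΦ.integrable.sub hWΨ.integrable).norm
  have h0 : ∫ θ, ‖Φ θ - Ψ θ‖ ∂muT = 0 :=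
    le_antisymm (by simpa [h] using integral_norm_sub_le_dH_mul hWΦ hWΨ)
      (integral_nonneg fun _ => norm_nonneg _)
  filter_upwards [(integral_eq_zero_iff_of_nonneg (fun _ => norm_nonneg _) hint).1 h0] with θ hθ
  exact sub_eq_zero.1 (norm_eq_zero.1 hθ)

end

theorem stmt_10_general {m : ℕ} (Φ Ψ Ξ : ℝ → Matrix (Fin m) (Fin m) ℂ)
    (hΦ : IsSpecDens Φ) (hΨ : IsSpecDens Ψ) :
    0 ≤ dH Φ Ψ ∧ dH Φ Φ = 0 ∧ (dH Φ Ψ = 0 → Φ =ᵐ[muT] Ψ) ∧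
      dH Φ Ψ = dH Ψ Φ ∧ dH Φ Ξ ≤ dH Φ Ψ + dH Ψ Ξ := by
  obtain ⟨WΦ, hWΦ⟩ := hΦ.exists_isFactor
  obtain ⟨WΨ, hWΨ⟩ := hΨ.exists_isFactor
  exact ⟨dH_nonneg Φ Ψ, dH_self Φ, ae_eq_of_dH_eq_zero hWΦ hWΨ, dH_comm Φ Ψ,
    dH_triangle Φ Ξ hΨ⟩

theorem stmt_10 {m : ℕ} (Φ Ψ Ξ : ℝ → Matrix (Fin m) (Fin m) ℂ)
    (hΦ : IsSpecDens Φ) (hΨ : IsSpecDens Ψ) (hΞ : IsSpecDens Ξ) :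
    0 ≤ dH Φ Ψ ∧ dH Φ Φ = 0 ∧ (dH Φ Ψ = 0 → Φ =ᵐ[muT] Ψ) ∧
      dH Φ Ψ = dH Ψ Φ ∧ dH Φ Ξ ≤ dH Φ Ψ + dH Ψ Ξ :=
  stmt_10_general Φ Ψ Ξ hΦ hΨ
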